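/- Let S¹ ↪ E → B be an oriented circle fibration with Euler class e ∈ H²(B;ℚ), where B is a simply-connected space of dimension 2n whose rational cohomology is concentrated in even degrees, and suppose B satisfies the Hard-Lefschetz property with class l ∈ H²(B;ℚ) such that e is a nonzero rational multiple of l. Then the rational cohomology of E vanishes in all odd degrees p ≤ n: H^p(E;ℚ) = 0 for p odd, p ≤ n. -/
import Mathlib


/-!  STATEMENT 2: for an oriented circle fibration `S¹ ↪ E → B` with `B`
simply-connected of dimension `2n`, rational cohomology of `B` concentrated in even
degrees, `B` satisfying Hard-Lefschetz with class `l`, and Euler class a nonzero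
rational multiple of `l`, the rational cohomology of `E` vanishes in all odd degrees
`p ≤ n`.  We formalize the rational cohomologies of `B` and `E` as `ℤ`-graded
`ℚ`-vector spaces together with the maps of the Gysin sequence
`⋯ → H^i(B) --∪e--> H^{i+2}(B) --π--> H^{i+2}(E) --δ--> H^{i+1}(B) → ⋯`. -/

section

variable (HB : ℤ → Type) [∀ i, AddCommGroup (HB i)] [∀ i, Module ℚ (HB i)]

/-- transport along an equality of degrees -/
def degCast {i j : ℤ} (h : i = j) : HB i →ₗ[ℚ] HB j := h ▸ LinearMap.id

/-- the `k`-fold iterate of cupping with the Lefschetz class `l` -/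
def Lpow (cupL : ∀ i : ℤ, HB i →ₗ[ℚ] HB (i + 2)) :
    (k : ℕ) → (i : ℤ) → (HB i →ₗ[ℚ] HB (i + 2 * k))
  | 0, i => degCast HB (by push_cast; ring)
  | (k + 1), i =>
      (degCast HB (show i + 2 + 2 * (k : ℤ) = i + 2 * ((k : ℕ) + 1 : ℕ) by push_cast; ring)).comp
        ((Lpow cupL k (i + 2)).comp (cupL i))

theorem stmt2 (n : ℕ) (hn : 1 ≤ n)
    (HE : ℤ → Type) [∀ i, AddCommGroup (HE i)] [∀ i, Module ℚ (HE i)]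
    (cupL cupE : ∀ i : ℤ, HB i →ₗ[ℚ] HB (i + 2))
    (π : ∀ i : ℤ, HB i →ₗ[ℚ] HE i)
    (δ : ∀ i : ℤ, HE i →ₗ[ℚ] HB (i - 1))
    -- cohomology vanishes in negative degrees
    (hBneg : ∀ i : ℤ, i < 0 → Subsingleton (HB i))
    (hEneg : ∀ i : ℤ, i < 0 → Subsingleton (HE i))
    -- `B` is simply connected
    (hB1 : Subsingleton (HB 1))
    -- `B` has dimension `2n`
    (hBdim : ∀ i : ℤ, 2 * (n : ℤ) < i → Subsingleton (HB i))
    -- the cohomology of `B` is concentrated in even degrees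
    (hBeven : ∀ i : ℤ, Odd i → Subsingleton (HB i))
    -- Hard-Lefschetz: `L^k : H^{n-k}(B) → H^{n+k}(B)` is bijective
    (hHL : ∀ k : ℕ, (k : ℤ) ≤ (n : ℤ) → Function.Bijective
      ((degCast HB (show ((n : ℤ) - k) + 2 * k = (n : ℤ) + k by ring)).comp
        (Lpow HB cupL k ((n : ℤ) - k))))
    -- the Euler class is a nonzero rational multiple of the Lefschetz class
    (heuler : ∃ c : ℚ, c ≠ 0 ∧ ∀ i x, cupE i x = c • cupL i x)
    -- exactness of the Gysin sequence
    (hex1 : ∀ i : ℤ, LinearMap.range (cupE i) = LinearMap.ker (π (i + 2)))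
    (hex2 : ∀ i : ℤ, LinearMap.range (π i) = LinearMap.ker (δ i))
    (hex3 : ∀ i : ℤ, LinearMap.range (δ i) = LinearMap.ker (cupE (i - 1))) :
    ∀ p : ℤ, Odd p → p ≤ (n : ℤ) → Subsingleton (HE p) := by

  -- `δ p` is injective since `H^p(B)=0` for odd `p`; then `δ p` lands in
  -- `ker (cupE (p-1)) = ker (cupL (p-1))`, and `cupL` is injective below degree `n`
  -- by Hard-Lefschetz.
  intro p hodd hpn
  rcases lt_or_ge p 0 with hneg | hpos
  · exact hEneg p hneg
  -- p ≥ 0 and odd, so p ≥ 1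
  have hp1 : 1 ≤ p := by
    rcases hodd with ⟨t, ht⟩; omega
  -- injectivity of δ p
  have hBp : Subsingleton (HB p) := hBeven p hodd
  have hπ0 : π p = 0 := by
    apply LinearMap.ext; intro x
    rw [Subsingleton.elim x 0]; simp
  have hδinj : Function.Injective (δ p) := by
    rw [← LinearMap.ker_eq_bot, ← hex2 p, hπ0, LinearMap.range_zero]
  -- injectivity of cupL at degree (n:ℤ) - (k+1) for k+1 ≤ n
  have hLinj : ∀ k : ℕ, (k + 1 : ℤ) ≤ (n : ℤ) →
      Function.Injective (cupL ((n : ℤ) - ((k + 1 : ℕ) : ℤ))) := by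
    intro k hk
    have hb := (hHL (k + 1) (by exact_mod_cast hk)).injective
    simp only [Lpow, LinearMap.coe_comp] at hb
    exact hb.of_comp.of_comp.of_comp
  -- rewrite to degree p - 1
  obtain ⟨k, hkeq⟩ : ∃ k : ℕ, (n : ℤ) - ((k + 1 : ℕ) : ℤ) = p - 1 := by
    refine ⟨(n - p).toNat, ?_⟩
    push_cast
    omega
  have hLp : Function.Injective (cupL (p - 1)) := by
    have := hLinj k (by omega)
    rwa [hkeq] at this
  obtain ⟨c, hc, hcup⟩ := heuler
  constructor
  intro x y
  suffices h : ∀ z : HE p, z = 0 by rw [h x, h y]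
  intro z
  have hz : δ p z ∈ LinearMap.ker (cupE (p - 1)) := by
    rw [← hex3 p]; exact ⟨z, rfl⟩
  have hz' : cupL (p - 1) (δ p z) = 0 := by
    have : cupE (p - 1) (δ p z) = 0 := hz
    rw [hcup] at this
    have h2 := congrArg (fun v => c⁻¹ • v) this
    simpa [smul_smul, inv_mul_cancel₀ hc] using h2
  have : δ p z = 0 := hLp (by rw [hz', map_zero])
  exact hδinj (by rw [this, map_zero])


end
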